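/- The number of equivalence classes, under rotation at the root, of planar rooted trees with n+1 nodes equals (1/(2n)) * Σ_{d | n} φ(n/d) * C(2d, d). -/

import Mathlib

/-- A planar rooted tree: a root with a linearly ordered list of subtrees. -/
inductive PlanarTree : Type
  | node : List PlanarTree → PlanarTree

namespace PlanarTree

mutual
  /-- The number of nodes of a planar rooted tree. -/
  def numNodes : PlanarTree → ℕ
    | .node ts => 1 + numNodesList ts
  /-- The total number of nodes of a list of planar rooted trees. -/
  def numNodesList : List PlanarTree → ℕ
    | [] => 0
    | t :: ts => numNodes t + numNodesList ts
end

/-- The list of subtrees attached to the root. -/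
def children : PlanarTree → List PlanarTree
  | .node ts => ts

end PlanarTree

/-- Two planar rooted trees are related by rotation at the root if one is obtained
from the other by cyclically permuting the subtrees attached to the root. -/
def RootRotRel (n : ℕ) (T T' : {T : PlanarTree // T.numNodes = n + 1}) : Prop :=
  ∃ k : ℕ, T'.1 = PlanarTree.node ((PlanarTree.children T.1).rotate k)

/-!
Encoding a planar tree by the Dyck word of the forest below its root identifies trees with `n + 1`
nodes with Dyck words of semilength `n`, and rotating the subtrees of the root with rotating the
word at a boundary between blocks. A rotation of a Dyck word into a Dyck word cuts it into two
balanced pieces, hence at such a boundary; and by the cycle lemma every word with `n` up- and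
`n` down-steps has a rotation that is a Dyck word. So the classes are the orbits of `ℤ/2n` acting
by rotation on these words, and Burnside's lemma counts them: rotation by `g` fixes exactly the
repetitions of a block of length `d = gcd(g, 2n)` with `d / 2` up-steps, of which there are
`C(d, d/2)` for even `d` and none for odd `d`. Grouping the `g` by `d` brings in `φ(2n/d)`, and
writing `d = 2d'` gives the formula.
-/

open List DyckStep

namespace List

variable {α : Type*}

theorem rotate_mul_eq_self {l : List α} {a : ℕ} (h : l.rotate a = l) (k : ℕ) :
    l.rotate (a * k) = l := by
  induction k with
  | zero => simp
  | succ k ih => rw [Nat.mul_succ, ← rotate_rotate, ih, h]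

theorem rotate_eq_self_iff_rotate_gcd {l : List α} {a : ℕ} :
    l.rotate a = l ↔ l.rotate (a.gcd l.length) = l := by
  refine ⟨fun h => ?_, fun h => ?_⟩
  · by_cases hlt : a.gcd l.length < l.length
    · obtain ⟨m, -, hm⟩ := Nat.exists_mul_mod_eq_gcd hlt
      rw [← hm, rotate_mod, rotate_mul_eq_self h]
    · rcases eq_or_ne l [] with rfl | hl
      · simp
      · rw [le_antisymm (Nat.gcd_le_right _ (length_pos_iff.mpr hl)) (not_lt.mp hlt),
          rotate_length]
  · obtain ⟨k, hk⟩ := Nat.gcd_dvd_left a l.length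
    rw [hk, rotate_mul_eq_self h]

theorem flatten_replicate_take_of_rotate_eq {l : List α} {d : ℕ} (h : l.rotate d = l) :
    ∀ e, e * d ≤ l.length → (replicate e (l.take d)).flatten = l.take (e * d)
  | 0, _ => by simp
  | e + 1, he => by
    rw [Nat.add_one_mul] at he
    have hd : d ≤ (l.drop (e * d)).length := by rw [length_drop]; omega
    have hblock : (l.drop (e * d)).take d = l.take d := by
      conv_rhs => rw [← rotate_mul_eq_self h e, Nat.mul_comm,
        rotate_eq_drop_append_take (by omega), take_append_of_le_length hd]
    rw [replicate_succ', flatten_append, flatten_replicate_take_of_rotate_eq h e (by omega),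
      Nat.add_one_mul, take_add, hblock, flatten_singleton]

theorem eq_flatten_replicate_of_rotate_eq {l : List α} {d e : ℕ} (hl : l.length = e * d)
    (h : l.rotate d = l) : l = (replicate e (l.take d)).flatten := by
  rw [flatten_replicate_take_of_rotate_eq h e hl.ge, ← hl, take_length]

theorem rotate_length_flatten_replicate (x : List α) (e : ℕ) :
    (replicate e x).flatten.rotate x.length = (replicate e x).flatten := by
  cases e with
  | zero => simp
  | succ e =>
    rw [replicate_succ, flatten_cons, rotate_append_length_eq, ← flatten_concat,
      ← replicate_succ', replicate_succ, flatten_cons]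

end List

def List.dyckHeight (l : List DyckStep) : ℤ := l.count U - l.count D

@[simp] theorem List.dyckHeight_nil : ([] : List DyckStep).dyckHeight = 0 := rfl

@[simp] theorem List.dyckHeight_append (l l' : List DyckStep) :
    (l ++ l').dyckHeight = l.dyckHeight + l'.dyckHeight := by
  simp only [dyckHeight, count_append]; push_cast; ring

namespace DyckWord

@[simp] theorem toList_add (p q : DyckWord) : (p + q).toList = p.toList ++ q.toList := rfl

/-- **Cycle lemma**: rotating at a point where the height is minimal gives a Dyck word. -/
theorem exists_toList_eq_rotate {w : List DyckStep} (hw : w.count U = w.count D) :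
    ∃ (m : ℕ) (p : DyckWord), p.toList = w.rotate m := by
  obtain ⟨i₀, hi₀, hmin⟩ := (Finset.range (w.length + 1)).exists_min_image
    (fun j => (w.take j).dyckHeight) Finset.nonempty_range_add_one
  have hi₀L : i₀ ≤ w.length := Nat.lt_succ_iff.mp (Finset.mem_range.mp hi₀)
  have hw0 : w.dyckHeight = 0 := by simp [dyckHeight, hw]
  have hmin_take : ∀ j, (w.take i₀).dyckHeight ≤ (w.take j).dyckHeight := fun j => by
    rw [take_eq_take_min (i := j)]
    exact hmin _ (Finset.mem_range.mpr (Nat.lt_succ_of_le (min_le_right _ _)))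
  -- the prefixes of `w.rotate i₀` are windows of `w ++ w` starting at `i₀`
  have hmin_double : ∀ j, (w.take i₀).dyckHeight ≤ ((w ++ w).take j).dyckHeight := fun j => by
    rw [take_append, dyckHeight_append]
    by_cases hj : j ≤ w.length
    · simpa [Nat.sub_eq_zero_of_le hj] using hmin_take j
    · rw [take_of_length_le (show w.length ≤ j by omega), hw0, zero_add]
      exact hmin_take _
  have hprefix : ∀ i ≤ w.length, (w.rotate i₀).take i = ((w ++ w).drop i₀).take i :=
    fun i hi => by
      rw [rotate_eq_drop_append_take hi₀L, drop_append_of_le_length hi₀L, take_append,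
        take_append, take_take, min_eq_left (by rw [length_drop]; omega)]
  have hcount (s : DyckStep) : (w.rotate i₀).count s = w.count s :=
    (rotate_perm w i₀).count_eq s
  refine ⟨i₀, ⟨w.rotate i₀, by rwa [hcount, hcount], fun i => ?_⟩, rfl⟩
  suffices 0 ≤ ((w.rotate i₀).take i).dyckHeight by simp only [dyckHeight] at this; omega
  rw [take_eq_take_min, length_rotate, hprefix _ (min_le_right _ _)]
  have := hmin_double (i₀ + min i w.length)
  rw [take_add, dyckHeight_append, take_append_of_le_length hi₀L] at this
  omega

theorem count_U_eq_count_D_of_toList_eq_append {p q : DyckWord} {x y : List DyckStep}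
    (hp : p.toList = x ++ y) (hq : q.toList = y ++ x) : x.count U = x.count D := by
  have hx := p.count_D_le_count_U x.length
  have hy := q.count_D_le_count_U y.length
  have hxy := p.count_U_eq_count_D
  rw [hp, take_left] at hx
  rw [hq, take_left] at hy
  rw [hp, count_append, count_append] at hxy
  omega

theorem toList_nest_prefix_of_prefix {p q : DyckWord} {x : List DyckStep}
    (hx : x <+: (p.nest + q).toList) (hne : x ≠ []) (hbal : x.count U = x.count D) :
    p.nest.toList <+: x := by
  refine prefix_of_prefix_length_le (prefix_append _ _) hx (not_lt.mp fun hlt => ?_)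
  obtain ⟨i, hi⟩ : ∃ i, x.length = i + 1 := Nat.exists_eq_add_one.mpr (length_pos_iff.mpr hne)
  have hret : i < (p.nest + q).firstReturn := by
    rw [firstReturn_add, if_neg nest_ne_zero, firstReturn_nest]
    simp only [nest, length_append, length_singleton] at hlt
    omega
  have := count_D_lt_count_U_of_lt_firstReturn hret
  rw [← hi, ← prefix_iff_eq_take.mp hx] at this
  omega

end DyckWord

theorem List.count_U_add_count_D (l : List DyckStep) : l.count U + l.count D = l.length := by
  induction l with
  | nil => rfl
  | cons s l ih => cases s <;> simp <;> omega

instance : Fintype DyckStep := ⟨{U, D}, fun s => by cases s <;> simp⟩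

theorem ncard_length_eq_count_U_eq (d c : ℕ) :
    {x : List DyckStep | x.length = d ∧ x.count U = c}.ncard = d.choose c := by
  induction d generalizing c with
  | zero =>
    rcases c with _ | c
    · rw [show {x : List DyckStep | x.length = 0 ∧ x.count U = 0} = {[]} by
        ext; simp +contextual]
      simp
    · rw [show {x : List DyckStep | x.length = 0 ∧ x.count U = c + 1} = ∅ by
        ext; simp +contextual]
      simp
  | succ d ih =>
    have hfin : ∀ c, {x : List DyckStep | x.length = d ∧ x.count U = c}.Finite := fun c =>
      (finite_length_eq DyckStep d).subset fun x hx => hx.1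
    rcases c with _ | c
    · have : {x : List DyckStep | x.length = d + 1 ∧ x.count U = 0}
          = (D :: ·) '' {x | x.length = d ∧ x.count U = 0} := by
        ext x; rcases x with _ | ⟨_ | _, x⟩ <;> simp
      rw [this, Set.ncard_image_of_injective _ cons_injective, ih, Nat.choose_zero_right,
        Nat.choose_zero_right]
    · have : {x : List DyckStep | x.length = d + 1 ∧ x.count U = c + 1}
          = (U :: ·) '' {x | x.length = d ∧ x.count U = c}
            ∪ (D :: ·) '' {x | x.length = d ∧ x.count U = c + 1} := by
        ext x; rcases x with _ | ⟨_ | _, x⟩ <;> simp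
      have hdisj : Disjoint ((U :: ·) '' {x | x.length = d ∧ x.count U = c})
          ((D :: ·) '' {x | x.length = d ∧ x.count U = c + 1}) := by
        rw [Set.disjoint_left]
        rintro _ ⟨x, -, rfl⟩ ⟨y, -, h⟩
        cases h
      rw [this, Set.ncard_union_eq hdisj ((hfin c).image _) ((hfin _).image _),
        Set.ncard_image_of_injective _ cons_injective,
        Set.ncard_image_of_injective _ cons_injective, ih, ih, Nat.choose_succ_succ]

def balancedWordsOfLength (d : ℕ) : Set (List DyckStep) :=
  {x | x.length = d ∧ 2 * x.count U = d}

theorem ncard_balancedWordsOfLength (d : ℕ) :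
    (balancedWordsOfLength d).ncard = if 2 ∣ d then d.choose (d / 2) else 0 := by
  split_ifs with h
  · obtain ⟨c, rfl⟩ := h
    rw [Nat.mul_div_cancel_left c two_pos, ← ncard_length_eq_count_U_eq]
    simp only [balancedWordsOfLength, Nat.mul_left_cancel_iff two_pos]
  · convert Set.ncard_empty (List DyckStep)
    exact Set.eq_empty_of_forall_notMem fun x hx => h ⟨_, hx.2.symm⟩

namespace PlanarTree

mutual
  def toDyckWord : PlanarTree → DyckWord
    | .node ts => forestToDyckWord ts
  def forestToDyckWord : List PlanarTree → DyckWord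
    | [] => 0
    | t :: ts => (toDyckWord t).nest + forestToDyckWord ts
end

mutual
  theorem semilength_toDyckWord : ∀ t : PlanarTree, (toDyckWord t).semilength + 1 = t.numNodes
    | .node ts => by rw [toDyckWord, numNodes, semilength_forestToDyckWord, Nat.add_comm]
  theorem semilength_forestToDyckWord :
      ∀ ts : List PlanarTree, (forestToDyckWord ts).semilength = numNodesList ts
    | [] => rfl
    | t :: ts => by
      rw [forestToDyckWord, numNodesList, DyckWord.semilength_add, DyckWord.semilength_nest,
        semilength_forestToDyckWord ts, semilength_toDyckWord t]
end

theorem forestToDyckWord_append (ts us : List PlanarTree) :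
    forestToDyckWord (ts ++ us) = forestToDyckWord ts + forestToDyckWord us := by
  induction ts with
  | nil => rw [nil_append, forestToDyckWord, zero_add]
  | cons t ts ih => rw [cons_append, forestToDyckWord, forestToDyckWord, ih, add_assoc]

theorem forestToDyckWord_cons_ne_zero (t : PlanarTree) (ts : List PlanarTree) :
    forestToDyckWord (t :: ts) ≠ 0 := by
  rw [forestToDyckWord, ← DyckWord.toList_ne_nil]
  exact append_ne_nil_of_left_ne_nil (DyckWord.toList_ne_nil.mpr DyckWord.nest_ne_zero) _

mutual
  theorem toDyckWord_injective : ∀ t u : PlanarTree, toDyckWord t = toDyckWord u → t = u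
    | .node ts, .node us, h => by
      rw [toDyckWord, toDyckWord] at h
      rw [forestToDyckWord_injective ts us h]
  theorem forestToDyckWord_injective :
      ∀ ts us : List PlanarTree, forestToDyckWord ts = forestToDyckWord us → ts = us
    | [], [], _ => rfl
    | [], u :: us, h => absurd h.symm (forestToDyckWord_cons_ne_zero u us)
    | t :: ts, [], h => absurd h (forestToDyckWord_cons_ne_zero t ts)
    | t :: ts, u :: us, h => by
      rw [forestToDyckWord, forestToDyckWord] at h
      have hinside := congrArg DyckWord.insidePart h
      rw [DyckWord.insidePart_add DyckWord.nest_ne_zero, DyckWord.insidePart_add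
        DyckWord.nest_ne_zero, DyckWord.insidePart_nest, DyckWord.insidePart_nest] at hinside
      obtain rfl := toDyckWord_injective t u hinside
      rw [forestToDyckWord_injective ts us (add_left_cancel h)]
end

theorem forestToDyckWord_surjective (p : DyckWord) : ∃ ts, forestToDyckWord ts = p := by
  by_cases hp : p = 0
  · exact ⟨[], by rw [forestToDyckWord, hp]⟩
  · obtain ⟨ts, hts⟩ := forestToDyckWord_surjective p.insidePart
    obtain ⟨us, hus⟩ := forestToDyckWord_surjective p.outsidePart
    exact ⟨node ts :: us, by
      rw [forestToDyckWord, toDyckWord, hts, hus, DyckWord.nest_insidePart_add_outsidePart hp]⟩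
termination_by p.semilength
decreasing_by
  · exact DyckWord.semilength_insidePart_lt hp
  · exact DyckWord.semilength_outsidePart_lt hp

theorem exists_eq_forestToDyckWord_take {ts : List PlanarTree} {x : List DyckStep}
    (hx : x <+: (forestToDyckWord ts).toList) (hbal : x.count U = x.count D) :
    ∃ j, x = (forestToDyckWord (ts.take j)).toList := by
  induction ts generalizing x with
  | nil => exact ⟨0, prefix_nil.mp hx⟩
  | cons t ts ih =>
    rcases eq_or_ne x [] with rfl | hne
    · exact ⟨0, rfl⟩
    rw [forestToDyckWord] at hx
    obtain ⟨x', rfl⟩ := DyckWord.toList_nest_prefix_of_prefix hx hne hbal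
    have hx' : x' <+: (forestToDyckWord ts).toList := (prefix_append_right_inj _).mp hx
    have hnest := (toDyckWord t).nest.count_U_eq_count_D
    rw [count_append, count_append] at hbal
    obtain ⟨j, rfl⟩ := ih hx' (by omega)
    exact ⟨j + 1, by rw [take_succ_cons, forestToDyckWord]; rfl⟩

theorem isRotated_toList_forestToDyckWord_iff {ts us : List PlanarTree} :
    (forestToDyckWord ts).toList ~r (forestToDyckWord us).toList ↔ ts ~r us := by
  refine ⟨fun ⟨m, hm⟩ => ?_, fun ⟨k, hk⟩ => ?_⟩
  · rw [rotate_eq_drop_append_take_mod] at hm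
    set l := (forestToDyckWord ts).toList
    obtain ⟨j, hj⟩ := exists_eq_forestToDyckWord_take (take_prefix (m % l.length) l)
      (DyckWord.count_U_eq_count_D_of_toList_eq_append (take_append_drop _ _).symm hm.symm)
    have hdrop : l.drop (m % l.length) = (forestToDyckWord (ts.drop j)).toList := by
      apply append_cancel_left (as := l.take (m % l.length))
      rw [take_append_drop, hj, ← DyckWord.toList_add, ← forestToDyckWord_append,
        take_append_drop]
    rw [hdrop, hj, ← DyckWord.toList_add, ← forestToDyckWord_append] at hm
    rw [← forestToDyckWord_injective _ _ (DyckWord.ext hm)]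
    nth_rewrite 1 [← take_append_drop j ts]
    exact isRotated_append
  · rw [← hk, rotate_eq_drop_append_take_mod, forestToDyckWord_append, DyckWord.toList_add]
    nth_rewrite 1 [← take_append_drop (k % ts.length) ts]
    rw [forestToDyckWord_append, DyckWord.toList_add]
    exact isRotated_append

theorem toDyckWord_eq_forestToDyckWord_children (t : PlanarTree) :
    toDyckWord t = forestToDyckWord t.children := by
  cases t; rfl

theorem rootRotRel_iff {n : ℕ} {T T' : {T : PlanarTree // T.numNodes = n + 1}} :
    RootRotRel n T T' ↔ T.1.children ~r T'.1.children := by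
  obtain ⟨⟨ts⟩, _⟩ := T
  obtain ⟨⟨us⟩, _⟩ := T'
  simp [RootRotRel, IsRotated, children, eq_comm]

end PlanarTree

abbrev BalancedWord (n : ℕ) : Type := {w : List DyckStep // w.length = 2 * n ∧ w.count U = n}

namespace BalancedWord

variable {n : ℕ}

instance : Finite (BalancedWord n) :=
  ((finite_length_eq DyckStep (2 * n)).subset fun _ (hw : _ ∧ _) => hw.1).to_subtype

instance [NeZero n] : AddAction (Fin (2 * n)) (BalancedWord n) where
  vadd g w :=
    ⟨w.1.rotate g, by rw [length_rotate, w.2.1], by rw [(rotate_perm _ _).count_eq, w.2.2]⟩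
  zero_vadd w := Subtype.ext (rotate_zero w.1)
  add_vadd g h := fun ⟨l, hl, _⟩ => Subtype.ext <| by
    change l.rotate (g + h : Fin (2 * n)) = (l.rotate h).rotate g
    have hmod := rotate_mod l (h + g)
    rw [hl] at hmod
    rw [rotate_rotate, Fin.val_add, Nat.add_comm, hmod]

theorem val_vadd [NeZero n] (g : Fin (2 * n)) (w : BalancedWord n) :
    (g +ᵥ w).1 = w.1.rotate g := rfl

theorem orbitRel_iff [NeZero n] {w w' : BalancedWord n} :
    AddAction.orbitRel (Fin (2 * n)) (BalancedWord n) w w' ↔ w'.1 ~r w.1 := by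
  refine ⟨fun ⟨g, hg⟩ => ⟨g, congrArg Subtype.val hg⟩, fun ⟨k, hk⟩ => ?_⟩
  refine ⟨⟨k % (2 * n), Nat.mod_lt _ (Nat.pos_of_neZero _)⟩, Subtype.ext ?_⟩
  rw [val_vadd, ← hk]
  simpa [w'.2.1] using rotate_mod w'.1 k

theorem natCard_rotate_eq_self [NeZero n] {d : ℕ} (hd : d ∣ 2 * n) :
    Nat.card {w : BalancedWord n // w.1.rotate d = w.1}
      = (balancedWordsOfLength d).ncard := by
  obtain ⟨e, he⟩ := hd
  have he0 : 0 < e := Nat.pos_of_ne_zero fun h => NeZero.ne n (by simpa [h] using he)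
  have hde : d ≤ 2 * n := he ▸ Nat.le_mul_of_pos_right d he0
  have hperiodic : ∀ w : {w : BalancedWord n // w.1.rotate d = w.1},
      w.1.1 = (replicate e (w.1.1.take d)).flatten := fun w =>
    eq_flatten_replicate_of_rotate_eq (w.1.2.1.trans (he.trans (Nat.mul_comm d e))) w.2
  rw [← Nat.card_coe_set_eq]
  refine Nat.card_congr
    { toFun := fun w => ⟨w.1.1.take d, by simp [w.1.2.1, hde], ?_⟩
      invFun := fun x =>
        ⟨⟨(replicate e x.1).flatten, by simp [x.2.1, he, Nat.mul_comm], ?_⟩, ?_⟩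
      left_inv := fun w => Subtype.ext <| Subtype.ext ?_
      right_inv := fun x => Subtype.ext ?_ }
  · have hcount := congrArg (count U) (hperiodic w)
    simp only [count_flatten, map_replicate, sum_replicate, smul_eq_mul, w.1.2.2] at hcount
    apply Nat.eq_of_mul_eq_mul_left he0
    rw [Nat.mul_left_comm, ← hcount, he, Nat.mul_comm]
  · simp only [count_flatten, map_replicate, sum_replicate, smul_eq_mul]
    apply Nat.eq_of_mul_eq_mul_left two_pos
    rw [Nat.mul_left_comm, x.2.2, he, Nat.mul_comm]
  · have hrot := rotate_length_flatten_replicate x.1 e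
    rwa [x.2.1] at hrot
  · exact (hperiodic w).symm
  · obtain ⟨e, rfl⟩ := Nat.exists_eq_add_one.mpr he0
    simp [replicate_succ, x.2.1]

theorem natCard_fixedBy [NeZero n] (g : Fin (2 * n)) :
    Nat.card (AddAction.fixedBy (BalancedWord n) g)
      = (balancedWordsOfLength ((2 * n).gcd g)).ncard := by
  rw [← natCard_rotate_eq_self (Nat.gcd_dvd_left _ _)]
  refine Nat.card_congr (Equiv.subtypeEquivRight fun w => ?_)
  rw [AddAction.mem_fixedBy, Subtype.ext_iff, val_vadd, rotate_eq_self_iff_rotate_gcd, w.2.1,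
    Nat.gcd_comm]

theorem natCard_orbitRel_quotient_mul [NeZero n] :
    Nat.card (AddAction.orbitRel.Quotient (Fin (2 * n)) (BalancedWord n)) * (2 * n)
      = ∑ i ∈ Finset.range (2 * n),
        (balancedWordsOfLength ((2 * n).gcd i)).ncard := by
  classical
  have := Fintype.ofFinite (BalancedWord n)
  have burnside := AddAction.sum_card_fixedBy_eq_card_orbits_mul_card_addGroup (Fin (2 * n))
    (BalancedWord n)
  simp only [← Nat.card_eq_fintype_card, natCard_fixedBy, Nat.card_fin] at burnside
  rw [← burnside]
  exact Fin.sum_univ_eq_sum_range (fun i => (balancedWordsOfLength ((2 * n).gcd i)).ncard) _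

end BalancedWord

theorem Nat.sum_range_gcd_eq_sum_divisors {M : Type*} [AddCommMonoid M] (L : ℕ) (f : ℕ → M) :
    ∑ i ∈ Finset.range L, f (L.gcd i) = ∑ d ∈ L.divisors, Nat.totient (L / d) • f d := by
  rcases L.eq_zero_or_pos with rfl | hL
  · simp
  rw [← Finset.sum_fiberwise_of_maps_to (g := L.gcd) (t := L.divisors)
    fun i _ => Nat.mem_divisors.mpr ⟨Nat.gcd_dvd_left L i, hL.ne'⟩]
  refine Finset.sum_congr rfl fun d hd => ?_
  rw [Finset.sum_congr rfl fun i hi => by rw [(Finset.mem_filter.mp hi).2], Finset.sum_const,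
    ← Nat.totient_div_of_dvd (Nat.dvd_of_mem_divisors hd)]

theorem Nat.sum_divisors_two_mul {M : Type*} [AddCommMonoid M] (n : ℕ) {f : ℕ → M}
    (hf : ∀ d, ¬2 ∣ d → f d = 0) :
    ∑ d ∈ (2 * n).divisors, f d = ∑ d ∈ n.divisors, f (2 * d) := by
  rw [← Finset.sum_image fun _ _ _ _ => Nat.eq_of_mul_eq_mul_left two_pos]
  refine (Finset.sum_subset (fun d hd => ?_) fun d hd hd' => hf d ?_).symm
  · obtain ⟨c, hc, rfl⟩ := Finset.mem_image.mp hd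
    obtain ⟨hcn, hn⟩ := Nat.mem_divisors.mp hc
    exact Nat.mem_divisors.mpr ⟨Nat.mul_dvd_mul_left 2 hcn, by omega⟩
  · rintro ⟨c, rfl⟩
    obtain ⟨hcn, hn⟩ := Nat.mem_divisors.mp hd
    exact hd' (Finset.mem_image.mpr ⟨c, Nat.mem_divisors.mpr
      ⟨(Nat.mul_dvd_mul_iff_left two_pos).mp hcn, by omega⟩, rfl⟩)

theorem Nat.card_quot_eq_card_quotient {α β : Type*} {r : α → α → Prop} {s : Setoid β}
    (f : α → β) (hf : ∀ a b, r a b ↔ s (f a) (f b)) (hsurj : ∀ b, ∃ a, s (f a) b) :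
    Nat.card (Quot r) = Nat.card (Quotient s) := by
  refine Nat.card_eq_of_bijective (Quot.lift (fun a => Quotient.mk s (f a))
    fun a b h => Quotient.sound ((hf a b).mp h)) ⟨?_, ?_⟩
  · rintro ⟨a⟩ ⟨b⟩ h
    exact Quot.sound ((hf a b).mpr (Quotient.exact h))
  · rintro ⟨b⟩
    obtain ⟨a, ha⟩ := hsurj b
    exact ⟨Quot.mk r a, Quotient.sound ha⟩

namespace PlanarTree

def toBalancedWord {n : ℕ} (T : {T : PlanarTree // T.numNodes = n + 1}) : BalancedWord n :=
  have hsemi : (toDyckWord T.1).semilength = n := by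
    have := semilength_toDyckWord T.1
    omega
  ⟨(toDyckWord T.1).toList, by rw [← DyckWord.two_mul_semilength_eq_length, hsemi], hsemi⟩

theorem natCard_quot_rootRotRel (n : ℕ) [NeZero n] :
    Nat.card (Quot (RootRotRel n))
      = Nat.card (AddAction.orbitRel.Quotient (Fin (2 * n)) (BalancedWord n)) := by
  refine Nat.card_quot_eq_card_quotient toBalancedWord (fun T T' => ?_) fun w => ?_
  · rw [BalancedWord.orbitRel_iff, isRotated_comm, rootRotRel_iff, toBalancedWord, toBalancedWord]
    simp only [toDyckWord_eq_forestToDyckWord_children, isRotated_toList_forestToDyckWord_iff]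
  · obtain ⟨m, p, hp⟩ := DyckWord.exists_toList_eq_rotate (w := w.1) (by
      have := count_U_add_count_D w.1
      omega)
    obtain ⟨ts, rfl⟩ := forestToDyckWord_surjective p
    have hnodes : (node ts).numNodes = n + 1 := by
      rw [← semilength_toDyckWord, toDyckWord, DyckWord.semilength, hp,
        (rotate_perm _ _).count_eq, w.2.2]
    exact ⟨⟨node ts, hnodes⟩, BalancedWord.orbitRel_iff.mpr ⟨m, hp.symm⟩⟩

end PlanarTree

/-- the number of planar rooted trees with `n+1` nodes, up to rotation
at the root, equals `(1/(2n)) Σ_{d|n} φ(n/d) C(2d,d)`. -/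
theorem stmt_5 (n : ℕ) (hn : 0 < n) :
    Nat.card (Quot (RootRotRel n)) =
      (∑ d ∈ n.divisors, Nat.totient (n / d) * Nat.choose (2 * d) d) / (2 * n) := by
  have : NeZero n := ⟨hn.ne'⟩
  have key : Nat.card (Quot (RootRotRel n)) * (2 * n)
      = ∑ d ∈ n.divisors, Nat.totient (n / d) * Nat.choose (2 * d) d := by
    rw [PlanarTree.natCard_quot_rootRotRel, BalancedWord.natCard_orbitRel_quotient_mul,
      Nat.sum_range_gcd_eq_sum_divisors (2 * n) fun d => (balancedWordsOfLength d).ncard,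
      Nat.sum_divisors_two_mul]
    · refine Finset.sum_congr rfl fun d _ => ?_
      rw [ncard_balancedWordsOfLength, if_pos (dvd_mul_right 2 d),
        Nat.mul_div_mul_left _ _ two_pos, Nat.mul_div_cancel_left _ two_pos, smul_eq_mul]
    · intro d hd
      rw [ncard_balancedWordsOfLength, if_neg hd, smul_zero]
  exact (Nat.div_eq_of_eq_mul_left (by omega) key.symm).symm
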